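/- arXiv:2409.15001 — 4 statements merged into one kernel-verified Lean document; each statement's English description precedes it below -/
import Mathlib

section
/- Let G be a finite simple locally linear graph with vertex set V and triangle set T, and let B be the |V| × |T| matrix over ℚ with B_{v,t} = 1 if vertex v belongs to triangle t and B_{v,t} = 0 otherwise. Then B · Bᵀ = A + (1/2)·D, where A is the adjacency matrix of G and D is the diagonal matrix of vertex degrees of G. -/
open SimpleGraph Polynomial Matrix

variable {V : Type*}

/-- A finite simple graph is *locally linear* if it has no isolated vertices and
every edge lies in exactly one triangle (3-clique). -/
def IsLocallyLinear (G : SimpleGraph V) : Prop :=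
  (∀ v : V, ∃ w : V, G.Adj v w) ∧
    ∀ ⦃x y : V⦄, G.Adj x y → ∃! t : Finset V, G.IsNClique 3 t ∧ x ∈ t ∧ y ∈ t

/-- The triangle graph `G*` of `G`: its vertices are the triangles (3-cliques) of `G`,
two distinct triangles being adjacent iff they share a common vertex. -/
def TriangleGraph (G : SimpleGraph V) : SimpleGraph {t : Finset V // G.IsNClique 3 t} where
  Adj a b := a ≠ b ∧ ∃ v : V, v ∈ a.1 ∧ v ∈ b.1
  symm := ⟨fun _ _ ⟨h, v, hv1, hv2⟩ => ⟨h.symm, v, hv2, hv1⟩⟩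
  loopless := ⟨fun _ ⟨h, _⟩ => h rfl⟩

/-- The diamond `K₄ - e`: the complete graph on four vertices with the edge `01` deleted. -/
def diamondGraph : SimpleGraph (Fin 4) where
  Adj a b := a ≠ b ∧ ¬(a = 0 ∧ b = 1) ∧ ¬(a = 1 ∧ b = 0)
  symm := ⟨fun _ _ ⟨h1, h2, h3⟩ =>
    ⟨h1.symm, fun ⟨ha, hb⟩ => h3 ⟨hb, ha⟩, fun ⟨ha, hb⟩ => h2 ⟨hb, ha⟩⟩⟩
  loopless := ⟨fun _ ⟨h, _⟩ => h rfl⟩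

instance (G : SimpleGraph V) [DecidableEq V] [Fintype V] [DecidableRel G.Adj] :
    Fintype {t : Finset V // G.IsNClique 3 t} := Subtype.fintype _

instance (G : SimpleGraph V) [Fintype V] [DecidableEq V] :
    DecidableRel (TriangleGraph G).Adj :=
  fun a b => inferInstanceAs (Decidable (a ≠ b ∧ ∃ v : V, v ∈ a.1 ∧ v ∈ b.1))

/-- The set of vertex subsets of `H` inducing a cycle of length `n`. -/
def inducedCycleSets {W : Type*} (H : SimpleGraph W) (n : ℕ) : Set (Set W) :=
  {s : Set W | s.ncard = n ∧ Nonempty (H.induce s ≃g cycleGraph n)}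

/-! The `(v, w)` entry of `B * Bᵀ` counts the triangles containing both `v` and `w`. For `v ≠ w`
this is one or zero according as `vw` is an edge. For `v = w`, double count the incidences
between neighbours `u` of `v` and triangles through `v`: each `u` lies in exactly one such
triangle (the one through the edge `vu`), and each triangle contributes two neighbours, so
`deg v = 2 · #{triangles through v}`. -/

open Finset

theorem Matrix.mul_transpose_apply_eq_card_of_incidence {R ι : Type*} [NonAssocSemiring R]
    [Fintype ι] [DecidableEq V] (s : ι → Finset V) (B : Matrix V ι R)
    (hB : ∀ v i, B v i = if v ∈ s i then 1 else 0) (v w : V) :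
    (B * Bᵀ) v w = #{i | v ∈ s i ∧ w ∈ s i} := by
  simp only [mul_apply, transpose_apply, hB, mul_ite, mul_one, mul_zero, ← ite_and]
  rw [sum_boole]
  simp only [and_comm]

section Triangles

variable [Fintype V] [DecidableEq V] {G : SimpleGraph V} [DecidableRel G.Adj] {v w : V}

theorem SimpleGraph.card_triangles_mem_mem_eq_zero (hvw : v ≠ w) (hadj : ¬G.Adj v w) :
    #{t : {t : Finset V // G.IsNClique 3 t} | v ∈ t.1 ∧ w ∈ t.1} = 0 := by
  rw [card_eq_zero, filter_eq_empty_iff]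
  rintro t - ⟨hv, hw⟩
  exact hadj (t.2.1 hv hw hvw)

theorem IsLocallyLinear.card_triangles_mem_mem (hG : IsLocallyLinear G) (hadj : G.Adj v w) :
    #{t : {t : Finset V // G.IsNClique 3 t} | v ∈ t.1 ∧ w ∈ t.1} = 1 := by
  obtain ⟨t, ht, huniq⟩ := hG.2 hadj
  rw [card_eq_one]
  refine ⟨⟨t, ht.1⟩, ?_⟩
  ext s
  simp only [mem_filter, mem_univ, true_and, mem_singleton]
  exact ⟨fun hs => Subtype.ext (huniq s.1 ⟨s.2, hs⟩), fun hs => hs ▸ ht.2⟩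

theorem IsLocallyLinear.degree_eq_two_mul_card_triangles_mem (hG : IsLocallyLinear G) (v : V) :
    G.degree v = 2 * #{t : {t : Finset V // G.IsNClique 3 t} | v ∈ t.1} := by
  have hcount := card_mul_eq_card_mul (fun u (t : {t : Finset V // G.IsNClique 3 t}) => u ∈ t.1)
    (s := G.neighborFinset v) (t := {t | v ∈ t.1}) (m := 1) (n := 2)
    (fun u hu => by
      rw [mem_neighborFinset] at hu
      simpa only [bipartiteAbove, filter_filter] using hG.card_triangles_mem_mem hu)
    (fun t ht => by
      rw [mem_filter] at ht
      have hbelow : (G.neighborFinset v).bipartiteBelow (fun u t => u ∈ t.1) t = t.1.erase v := by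
        ext u
        simp only [mem_bipartiteBelow, mem_neighborFinset, mem_erase]
        exact ⟨fun ⟨hadj, hu⟩ => ⟨hadj.ne', hu⟩,
          fun ⟨hne, hu⟩ => ⟨t.2.1 ht.2 hu hne.symm, hu⟩⟩
      rw [hbelow, card_erase_of_mem ht.2, t.2.2])
  rw [card_neighborFinset_eq_degree, mul_one] at hcount
  rw [hcount, mul_comm]

end Triangles

/-- For the vertex–triangle incidence matrix `B` of a finite locally linear graph `G`,
`B ⬝ Bᵀ = A + (1/2) ⬝ D`. -/
theorem incidence_mul_transpose [Fintype V] [DecidableEq V] (G : SimpleGraph V)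
    [DecidableRel G.Adj] (hG : IsLocallyLinear G)
    (B : Matrix V {t : Finset V // G.IsNClique 3 t} ℚ)
    (hB : ∀ (v : V) (t : {t : Finset V // G.IsNClique 3 t}),
      B v t = if v ∈ t.1 then 1 else 0) :
    B * Bᵀ = G.adjMatrix ℚ +
      (1/2 : ℚ) • Matrix.diagonal fun v => (G.degree v : ℚ) := by
  ext v w
  rw [Matrix.mul_transpose_apply_eq_card_of_incidence Subtype.val B hB]
  simp only [Matrix.add_apply, Matrix.smul_apply, diagonal_apply, adjMatrix_apply, smul_eq_mul]
  by_cases hvw : v = w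
  · subst hvw
    simp only [and_self, G.loopless.irrefl v, if_false, if_true, zero_add,
      hG.degree_eq_two_mul_card_triangles_mem v]
    push_cast
    ring
  · by_cases hadj : G.Adj v w
    · simp [hvw, hadj, hG.card_triangles_mem_mem hadj]
    · simp [hvw, hadj, card_triangles_mem_mem_eq_zero hvw hadj]
end

section
/- If G is a finite simple locally linear graph and t₁, t₂, t₃ are three pairwise distinct triangles of G such that each pair among them shares a common vertex, then there is a single vertex of G belonging to all three triangles t₁, t₂, t₃. -/
open SimpleGraph Polynomial Matrix

variable {V : Type*}

namespace IsLocallyLinear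

variable {G : SimpleGraph V} {s t t₁ t₂ t₃ : Finset V} {x y z : V}

theorem eq_of_adj_of_mem (hG : IsLocallyLinear G) (hs : G.IsNClique 3 s)
    (ht : G.IsNClique 3 t) (hxy : G.Adj x y) (hxs : x ∈ s) (hys : y ∈ s) (hxt : x ∈ t)
    (hyt : y ∈ t) : s = t :=
  (hG.2 hxy).unique ⟨hs, hxs, hys⟩ ⟨ht, hxt, hyt⟩

theorem eq_of_mem_of_mem (hG : IsLocallyLinear G) (hs : G.IsNClique 3 s)
    (ht : G.IsNClique 3 t) (hst : s ≠ t) (hxs : x ∈ s) (hys : y ∈ s) (hxt : x ∈ t)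
    (hyt : y ∈ t) : x = y := by
  by_contra hxy
  exact hst (hG.eq_of_adj_of_mem hs ht (hs.1 hxs hys hxy) hxs hys hxt hyt)

theorem mem_of_adj_of_adj [DecidableEq V] (hG : IsLocallyLinear G) (ht : G.IsNClique 3 t)
    (hxt : x ∈ t) (hyt : y ∈ t) (hxy : G.Adj x y) (hxz : G.Adj x z) (hyz : G.Adj y z) :
    z ∈ t := by
  have hxyz : ({x, y, z} : Finset V) = t :=
    hG.eq_of_adj_of_mem (is3Clique_triple_iff.2 ⟨hxy, hxz, hyz⟩) ht hxy (by simp) (by simp)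
      hxt hyt
  exact hxyz ▸ by simp

theorem exists_mem_of_pairwise_mem (hG : IsLocallyLinear G) (h₁ : G.IsNClique 3 t₁)
    (h₂ : G.IsNClique 3 t₂) (h₃ : G.IsNClique 3 t₃) (h12 : t₁ ≠ t₂) {a b c : V}
    (ha₁ : a ∈ t₁) (ha₂ : a ∈ t₂) (hb₁ : b ∈ t₁) (hb₃ : b ∈ t₃) (hc₂ : c ∈ t₂)
    (hc₃ : c ∈ t₃) : ∃ v, v ∈ t₁ ∧ v ∈ t₂ ∧ v ∈ t₃ := by
  classical
  by_cases hab : a = b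
  · exact ⟨a, ha₁, ha₂, hab ▸ hb₃⟩
  by_cases hac : a = c
  · exact ⟨a, ha₁, ha₂, hac ▸ hc₃⟩
  by_cases hbc : b = c
  · exact ⟨b, hb₁, hbc ▸ hc₂, hb₃⟩
  -- otherwise `a, b, c` span a triangle through the edge `ab` of `t₁`, so `c ∈ t₁ ∩ t₂`
  have hc₁ : c ∈ t₁ :=
    hG.mem_of_adj_of_adj h₁ ha₁ hb₁ (h₁.1 ha₁ hb₁ hab) (h₂.1 ha₂ hc₂ hac) (h₃.1 hb₃ hc₃ hbc)
  exact absurd (hG.eq_of_mem_of_mem h₁ h₂ h12 ha₁ hc₁ ha₂ hc₂) hac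

end IsLocallyLinear

theorem three_triangles_common_vertex_general (G : SimpleGraph V)
    (hG : IsLocallyLinear G) (t₁ t₂ t₃ : Finset V)
    (h₁ : G.IsNClique 3 t₁) (h₂ : G.IsNClique 3 t₂) (h₃ : G.IsNClique 3 t₃)
    (h12 : t₁ ≠ t₂)
    (s12 : ∃ v, v ∈ t₁ ∧ v ∈ t₂) (s13 : ∃ v, v ∈ t₁ ∧ v ∈ t₃)
    (s23 : ∃ v, v ∈ t₂ ∧ v ∈ t₃) :
    ∃! v : V, v ∈ t₁ ∧ v ∈ t₂ ∧ v ∈ t₃ := by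
  obtain ⟨a, ha₁, ha₂⟩ := s12
  obtain ⟨b, hb₁, hb₃⟩ := s13
  obtain ⟨c, hc₂, hc₃⟩ := s23
  obtain ⟨v, hv⟩ := hG.exists_mem_of_pairwise_mem h₁ h₂ h₃ h12 ha₁ ha₂ hb₁ hb₃ hc₂ hc₃
  exact ⟨v, hv, fun w hw => hG.eq_of_mem_of_mem h₁ h₂ h12 hw.1 hv.1 hw.2.1 hv.2.1⟩

/-- In a finite locally linear graph, three pairwise distinct, pairwise intersecting
triangles share a single common vertex. -/
theorem three_triangles_common_vertex [Fintype V] (G : SimpleGraph V)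
    (hG : IsLocallyLinear G) (t₁ t₂ t₃ : Finset V)
    (h₁ : G.IsNClique 3 t₁) (h₂ : G.IsNClique 3 t₂) (h₃ : G.IsNClique 3 t₃)
    (h12 : t₁ ≠ t₂) (h13 : t₁ ≠ t₃) (h23 : t₂ ≠ t₃)
    (s12 : ∃ v, v ∈ t₁ ∧ v ∈ t₂) (s13 : ∃ v, v ∈ t₁ ∧ v ∈ t₃)
    (s23 : ∃ v, v ∈ t₂ ∧ v ∈ t₃) :
    ∃! v : V, v ∈ t₁ ∧ v ∈ t₂ ∧ v ∈ t₃ :=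
  three_triangles_common_vertex_general G hG t₁ t₂ t₃ h₁ h₂ h₃ h12 s12 s13 s23
end

section
/- For every finite simple graph H that contains no induced subgraph isomorphic to the diamond K₄ − e and no induced subgraph isomorphic to K_{1,4}, there exists a finite simple locally linear graph G whose triangle graph G* is isomorphic to H. -/
open SimpleGraph Polynomial Matrix

variable {V : Type*}

/-!
In a diamond-free graph `H` every edge `wx` lies in a unique maximal clique, namely `w`, `x` and
their common neighbours, and since neighbours of `w` in different such cliques are pairwise
non-adjacent, `K_{1,4}`-freeness leaves at most three of these cliques at each vertex. Take one
point for every edge clique and pad with private points so that each vertex `w` of `H` gets a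
line `T w` of exactly three points, and let `G` join two points lying on a common line. Two lines
meet in at most one point (the clique of the edge joining their vertices), and three pairwise
meeting lines pass through a common point, because their three vertices lie in one clique. These
two facts force every triangle of `G` to be a line, so `G` is locally linear and `G* ≅ H`.
-/

section TriangleSystem

open Finset

variable {ι : Type*}

structure IsTriangleSystem (T : ι → Finset V) : Prop where
  card_eq : ∀ i, (T i).card = 3
  exists_mem : ∀ v, ∃ i, v ∈ T i
  eq_of_mem_of_mem : ∀ ⦃i j : ι⦄ ⦃a b : V⦄, a ≠ b → a ∈ T i → b ∈ T i → a ∈ T j → b ∈ T j →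
    i = j
  exists_mem_of_not_disjoint : ∀ ⦃i j k : ι⦄, i ≠ j → i ≠ k → j ≠ k →
    ¬Disjoint (T i) (T j) → ¬Disjoint (T i) (T k) → ¬Disjoint (T j) (T k) →
    ∃ v, v ∈ T i ∧ v ∈ T j ∧ v ∈ T k

def collinearityGraph (T : ι → Finset V) : SimpleGraph V where
  Adj a b := a ≠ b ∧ ∃ i, a ∈ T i ∧ b ∈ T i
  symm := ⟨fun _ _ ⟨hne, i, ha, hb⟩ => ⟨hne.symm, i, hb, ha⟩⟩
  loopless := ⟨fun _ h => h.1 rfl⟩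

namespace IsTriangleSystem

variable {T : ι → Finset V} (hT : IsTriangleSystem T)
include hT

lemma exists_ne_mem (i : ι) (a : V) : ∃ b ∈ T i, b ≠ a :=
  exists_mem_ne (by rw [hT.card_eq]; norm_num) a

lemma injective : Function.Injective T := by
  intro i j hij
  obtain ⟨a, ha⟩ := card_pos.1 (by rw [hT.card_eq i]; norm_num)
  obtain ⟨b, hb, hba⟩ := hT.exists_ne_mem i a
  exact hT.eq_of_mem_of_mem hba hb ha (hij ▸ hb) (hij ▸ ha)

lemma exists_mem_of_pairwise_collinear {a b c : V} {i j k : ι} (hab : a ≠ b)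
    (hai : a ∈ T i) (hbi : b ∈ T i) (hbj : b ∈ T j) (hcj : c ∈ T j) (hak : a ∈ T k)
    (hck : c ∈ T k) : ∃ l, a ∈ T l ∧ b ∈ T l ∧ c ∈ T l := by
  by_cases hij : i = j
  · exact ⟨i, hai, hbi, hij ▸ hcj⟩
  by_cases hik : i = k
  · exact ⟨i, hai, hbi, hik ▸ hck⟩
  by_cases hjk : j = k
  · exact ⟨j, hjk ▸ hak, hbj, hcj⟩
  obtain ⟨v, hvi, hvj, hvk⟩ := hT.exists_mem_of_not_disjoint hij hik hjk
    (not_disjoint_iff.2 ⟨b, hbi, hbj⟩) (not_disjoint_iff.2 ⟨a, hai, hak⟩)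
    (not_disjoint_iff.2 ⟨c, hcj, hck⟩)
  have hvb : v = b := by_contra fun h => hij (hT.eq_of_mem_of_mem h hvi hbi hvj hbj)
  have hva : v = a := by_contra fun h => hik (hT.eq_of_mem_of_mem h hvi hai hvk hak)
  exact absurd (hva.symm.trans hvb) hab

lemma isNClique_three_iff [DecidableEq V] {t : Finset V} :
    (collinearityGraph T).IsNClique 3 t ↔ ∃ i, T i = t := by
  constructor
  · intro ht
    obtain ⟨a, b, c, hab, hac, hbc, rfl⟩ := card_eq_three.1 ht.card_eq
    obtain ⟨-, i, hai, hbi⟩ := ht.isClique (by simp) (by simp) hab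
    obtain ⟨-, j, hbj, hcj⟩ := ht.isClique (by simp) (by simp) hbc
    obtain ⟨-, k, hak, hck⟩ := ht.isClique (by simp) (by simp) hac
    obtain ⟨l, hal, hbl, hcl⟩ := hT.exists_mem_of_pairwise_collinear hab hai hbi hbj hcj hak hck
    refine ⟨l, (eq_of_subset_of_card_le ?_ ?_).symm⟩
    · simp [insert_subset_iff, hal, hbl, hcl]
    · rw [hT.card_eq, ht.card_eq]
  · rintro ⟨i, rfl⟩
    exact ⟨fun a ha b hb hab => ⟨hab, i, ha, hb⟩, hT.card_eq i⟩

lemma isLocallyLinear [DecidableEq V] : IsLocallyLinear (collinearityGraph T) := by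
  refine ⟨fun v => ?_, fun a b ⟨hab, i, hai, hbi⟩ => ⟨T i, ?_, ?_⟩⟩
  · obtain ⟨i, hi⟩ := hT.exists_mem v
    obtain ⟨w, hw, hwv⟩ := hT.exists_ne_mem i v
    exact ⟨w, hwv.symm, i, hi, hw⟩
  · exact ⟨hT.isNClique_three_iff.2 ⟨i, rfl⟩, hai, hbi⟩
  · rintro t ⟨ht, hat, hbt⟩
    obtain ⟨j, rfl⟩ := hT.isNClique_three_iff.1 ht
    rw [hT.eq_of_mem_of_mem hab hat hbt hai hbi]

noncomputable def triangleGraphIso [DecidableEq V] (H : SimpleGraph ι)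
    (hadj : ∀ i j, H.Adj i j ↔ i ≠ j ∧ ¬Disjoint (T i) (T j)) :
    H ≃g TriangleGraph (collinearityGraph T) where
  toEquiv := Equiv.ofBijective (fun i => ⟨T i, hT.isNClique_three_iff.2 ⟨i, rfl⟩⟩)
    ⟨fun i j hij => hT.injective (congrArg Subtype.val hij),
      fun t => (hT.isNClique_three_iff.1 t.2).imp fun _ hi => Subtype.ext hi⟩
  map_rel_iff' {i j} := by
    change (_ ≠ _ ∧ ∃ v, v ∈ T i ∧ v ∈ T j) ↔ _
    rw [(Equiv.injective _).ne_iff, hadj, not_disjoint_iff]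

lemma map {V' : Type*} (e : V ≃ V') : IsTriangleSystem fun i => (T i).map e.toEmbedding := by
  refine ⟨fun i => by rw [card_map, hT.card_eq], fun v => ?_, fun i j a b hab => ?_,
    fun i j k hij hik hjk hij' hik' hjk' => ?_⟩
  · simpa [mem_map_equiv] using hT.exists_mem (e.symm v)
  · simp only [mem_map_equiv]
    exact hT.eq_of_mem_of_mem (e.symm.injective.ne hab)
  · simp only [disjoint_map] at hij' hik' hjk'
    obtain ⟨v, hv⟩ := hT.exists_mem_of_not_disjoint hij hik hjk hij' hik' hjk'
    exact ⟨e v, by simpa [mem_map_equiv] using hv⟩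

lemma exists_locallyLinear_triangleGraph_iso [Finite V] (H : SimpleGraph ι)
    (hadj : ∀ i j, H.Adj i j ↔ i ≠ j ∧ ¬Disjoint (T i) (T j)) :
    ∃ (n : ℕ) (G : SimpleGraph (Fin n)), IsLocallyLinear G ∧ Nonempty (TriangleGraph G ≃g H) := by
  obtain ⟨n, ⟨e⟩⟩ := Finite.exists_equiv_fin V
  have hT' := hT.map e
  refine ⟨n, collinearityGraph _, hT'.isLocallyLinear, ⟨(hT'.triangleGraphIso H ?_).symm⟩⟩
  simpa only [disjoint_map] using hadj

end IsTriangleSystem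

end TriangleSystem

section Forbidden

variable {W : Type*} {H : SimpleGraph W}

lemma adj_of_isEmpty_diamondGraph_embedding (hD : IsEmpty (diamondGraph ↪g H)) {a b c d : W}
    (hcd : H.Adj c d) (hac : H.Adj a c) (had : H.Adj a d) (hbc : H.Adj b c) (hbd : H.Adj b d)
    (hab : a ≠ b) : H.Adj a b := by
  by_contra hnab
  have hnba : ¬H.Adj b a := fun h => hnab h.symm
  refine hD.false ⟨⟨![a, b, c, d], fun i j hij => ?_⟩, fun {i j} => ?_⟩
  · fin_cases i <;> fin_cases j <;>
      simp_all [hac.ne, had.ne, hbc.ne, hbd.ne, hcd.ne, hac.ne', had.ne', hbc.ne', hbd.ne', hcd.ne']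
  · change H.Adj (![a, b, c, d] i) (![a, b, c, d] j) ↔ _
    fin_cases i <;> fin_cases j <;>
      simp [diamondGraph, hac, had, hbc, hbd, hcd, hac.symm, had.symm, hbc.symm, hbd.symm,
        hcd.symm, hnab, hnba]

def starEmbedding {α β : Type*} [Subsingleton α] {w : W} {x : β ↪ W}
    (hadj : ∀ i, H.Adj w (x i)) (hind : ∀ i j, ¬H.Adj (x i) (x j)) :
    completeBipartiteGraph α β ↪g H where
  toFun := Sum.elim (fun _ => w) x
  inj' := by
    rintro (i | i) (j | j) h
    · exact congrArg Sum.inl (Subsingleton.elim i j)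
    · exact absurd h (hadj j).ne
    · exact absurd h.symm (hadj i).ne
    · exact congrArg Sum.inr (x.injective h)
  map_rel_iff' {i j} := by
    change H.Adj (Sum.elim (fun _ => w) x i) (Sum.elim (fun _ => w) x j) ↔ _
    rcases i with i | i <;> rcases j with j | j <;> simp [hadj, (hadj _).symm, hind]

lemma card_le_three_of_isIndepSet (hK : IsEmpty (completeBipartiteGraph (Fin 1) (Fin 4) ↪g H))
    {w : W} {s : Finset W} (hs : ↑s ⊆ H.neighborSet w) (hind : H.IsIndepSet ↑s) :
    s.card ≤ 3 := by
  by_contra! h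
  obtain ⟨x, hx⟩ := Function.Embedding.exists_of_card_le_finset (α := Fin 4) (s := s)
    (by rw [Fintype.card_fin]; omega)
  have hxs : ∀ i, x i ∈ s := fun i => hx ⟨i, rfl⟩
  refine hK.false (starEmbedding (fun i => hs (hxs i)) fun i j hij => ?_)
  exact hind (hxs i) (hxs j) hij.ne hij

end Forbidden

section EdgeCliques

open Finset

variable {W : Type*} [Fintype W] [DecidableEq W] {H : SimpleGraph W} [DecidableRel H.Adj]

variable (H) in
def edgeClique (w x : W) : Finset W :=
  univ.filter fun v => (v = w ∨ H.Adj w v) ∧ (v = x ∨ H.Adj x v)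

@[simp]
lemma mem_edgeClique {w x v : W} :
    v ∈ edgeClique H w x ↔ (v = w ∨ H.Adj w v) ∧ (v = x ∨ H.Adj x v) := by
  simp [edgeClique]

lemma left_mem_edgeClique {w x : W} (h : H.Adj w x) : w ∈ edgeClique H w x := by
  simp [h.symm]

lemma right_mem_edgeClique {w x : W} (h : H.Adj w x) : x ∈ edgeClique H w x := by
  simp [h]

lemma isClique_edgeClique (hD : IsEmpty (diamondGraph ↪g H)) {w x : W} (h : H.Adj w x) :
    H.IsClique (edgeClique H w x : Set W) := by
  intro c hc d hd hcd
  rw [mem_coe, mem_edgeClique] at hc hd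
  by_cases hcw : c = w
  · exact hcw ▸ hd.1.resolve_left (hcw ▸ hcd).symm
  by_cases hcx : c = x
  · exact hcx ▸ hd.2.resolve_left (hcx ▸ hcd).symm
  by_cases hdw : d = w
  · exact hdw ▸ (hc.1.resolve_left (hdw ▸ hcd)).symm
  by_cases hdx : d = x
  · exact hdx ▸ (hc.2.resolve_left (hdx ▸ hcd)).symm
  exact adj_of_isEmpty_diamondGraph_embedding hD h (hc.1.resolve_left hcw).symm
    (hc.2.resolve_left hcx).symm (hd.1.resolve_left hdw).symm (hd.2.resolve_left hdx).symm hcd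

lemma edgeClique_subset (hD : IsEmpty (diamondGraph ↪g H)) {w x y z : W} (hwx : H.Adj w x)
    (hy : y ∈ edgeClique H w x) (hz : z ∈ edgeClique H w x) :
    edgeClique H w x ⊆ edgeClique H y z := by
  have hC := isClique_edgeClique hD hwx
  intro v hv
  rw [mem_edgeClique]
  exact ⟨or_iff_not_imp_left.2 fun h => hC hy hv (Ne.symm h),
    or_iff_not_imp_left.2 fun h => hC hz hv (Ne.symm h)⟩

lemma edgeClique_eq (hD : IsEmpty (diamondGraph ↪g H)) {w x y z : W} (hwx : H.Adj w x)
    (hy : y ∈ edgeClique H w x) (hz : z ∈ edgeClique H w x) (hyz : y ≠ z) :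
    edgeClique H y z = edgeClique H w x := by
  have hsub := edgeClique_subset hD hwx hy hz
  refine subset_antisymm (edgeClique_subset hD (isClique_edgeClique hD hwx hy hz hyz) ?_ ?_) hsub
  · exact hsub (left_mem_edgeClique hwx)
  · exact hsub (right_mem_edgeClique hwx)

variable (H) in
def edgeCliques : Finset (Finset W) :=
  (univ.filter fun p : W × W => H.Adj p.1 p.2).image fun p => edgeClique H p.1 p.2

lemma mem_edgeCliques {C : Finset W} :
    C ∈ edgeCliques H ↔ ∃ w x, H.Adj w x ∧ edgeClique H w x = C := by
  simp [edgeCliques]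

lemma eq_edgeClique_of_mem_edgeCliques (hD : IsEmpty (diamondGraph ↪g H)) {C : Finset W}
    (hC : C ∈ edgeCliques H) {v v' : W} (hv : v ∈ C) (hv' : v' ∈ C) (hne : v ≠ v') :
    H.Adj v v' ∧ C = edgeClique H v v' := by
  obtain ⟨w, x, hwx, rfl⟩ := mem_edgeCliques.1 hC
  exact ⟨isClique_edgeClique hD hwx hv hv' hne, (edgeClique_eq hD hwx hv hv' hne).symm⟩

variable (H) in
def cliquesAt (w : W) : Finset (Finset W) := (edgeCliques H).filter (w ∈ ·)

lemma card_cliquesAt_le_three (hD : IsEmpty (diamondGraph ↪g H))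
    (hK : IsEmpty (completeBipartiteGraph (Fin 1) (Fin 4) ↪g H)) (w : W) :
    (cliquesAt H w).card ≤ 3 := by
  have hsurj : Set.SurjOn (edgeClique H w) (H.neighborSet w) (cliquesAt H w) := by
    intro C hC
    obtain ⟨hC, hwC⟩ := mem_filter.1 hC
    obtain ⟨a, b, hab, rfl⟩ := mem_edgeCliques.1 hC
    obtain ⟨x, hx, hxw⟩ : ∃ x ∈ edgeClique H a b, x ≠ w := by
      by_cases haw : a = w
      · exact ⟨b, right_mem_edgeClique hab, haw ▸ hab.ne'⟩
      · exact ⟨a, left_mem_edgeClique hab, haw⟩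
    obtain ⟨hwx, hC⟩ := eq_edgeClique_of_mem_edgeCliques hD hC hwC hx hxw.symm
    exact ⟨x, hwx, hC.symm⟩
  obtain ⟨u, hu, hinj, himage⟩ := exists_subset_injOn_image_eq_of_surjOn _ _ hsurj
  -- two adjacent representatives would span the same edge clique
  have hind : H.IsIndepSet ↑u := fun x hx y hy hxy hadj =>
    hxy (hinj hx hy (edgeClique_eq hD (hu hx) (left_mem_edgeClique (hu hx))
      (mem_edgeClique.2 ⟨Or.inr (hu hy), Or.inr hadj⟩) (hu hy).ne).symm)
  rw [← himage, card_image_of_injOn hinj]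
  exact card_le_three_of_isIndepSet hK hu hind

end EdgeCliques

section Construction

open Finset

variable {W : Type*} [Fintype W] [DecidableEq W] {H : SimpleGraph W} [DecidableRel H.Adj]

variable (H) in
abbrev Slot : Type _ :=
  {C // C ∈ edgeCliques H} ⊕ Σ w, Fin (3 - (cliquesAt H w).card)

variable (H) in
def triangleAt (w : W) : Finset (Slot H) :=
  ((cliquesAt H w).subtype (· ∈ edgeCliques H)).disjSum
    (univ.map (Function.Embedding.sigmaMk w))

@[simp]
lemma inl_mem_triangleAt {C : {C // C ∈ edgeCliques H}} {w : W} :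
    Sum.inl C ∈ triangleAt H w ↔ w ∈ C.1 := by
  rw [triangleAt, inl_mem_disjSum, mem_subtype, cliquesAt, mem_filter]
  exact and_iff_right C.2

@[simp]
lemma inr_mem_triangleAt {p : Σ w, Fin (3 - (cliquesAt H w).card)} {w : W} :
    Sum.inr p ∈ triangleAt H w ↔ p.1 = w := by
  obtain ⟨w', i⟩ := p
  rw [triangleAt, inr_mem_disjSum, mem_map]
  constructor
  · rintro ⟨i, -, h⟩
    exact (congrArg Sigma.fst h).symm
  · rintro rfl
    exact ⟨i, mem_univ _, rfl⟩

lemma card_triangleAt (hD : IsEmpty (diamondGraph ↪g H))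
    (hK : IsEmpty (completeBipartiteGraph (Fin 1) (Fin 4) ↪g H)) (w : W) :
    (triangleAt H w).card = 3 := by
  have hsub : (cliquesAt H w).filter (· ∈ edgeCliques H) = cliquesAt H w :=
    filter_true_of_mem fun _ hC => (mem_filter.1 hC).1
  rw [triangleAt, card_disjSum, card_subtype, hsub, card_map, card_univ, Fintype.card_fin]
  have := card_cliquesAt_le_three hD hK w
  omega

lemma exists_inl_of_mem_triangleAt {v : Slot H} {w w' : W} (hw : v ∈ triangleAt H w)
    (hw' : v ∈ triangleAt H w') (hne : w ≠ w') : ∃ C, v = Sum.inl C ∧ w ∈ C.1 ∧ w' ∈ C.1 := by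
  rcases v with C | p
  · exact ⟨C, rfl, inl_mem_triangleAt.1 hw, inl_mem_triangleAt.1 hw'⟩
  · exact absurd ((inr_mem_triangleAt.1 hw).symm.trans (inr_mem_triangleAt.1 hw')) hne

lemma adj_iff_not_disjoint_triangleAt (hD : IsEmpty (diamondGraph ↪g H)) (w w' : W) :
    H.Adj w w' ↔ w ≠ w' ∧ ¬Disjoint (triangleAt H w) (triangleAt H w') := by
  refine ⟨fun h => ⟨h.ne, not_disjoint_iff.2 ?_⟩, fun ⟨hne, h⟩ => ?_⟩
  · refine ⟨Sum.inl ⟨edgeClique H w w', mem_edgeCliques.2 ⟨w, w', h, rfl⟩⟩, ?_, ?_⟩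
    · exact inl_mem_triangleAt.2 (left_mem_edgeClique h)
    · exact inl_mem_triangleAt.2 (right_mem_edgeClique h)
  · obtain ⟨v, hw, hw'⟩ := not_disjoint_iff.1 h
    obtain ⟨C, -, hwC, hw'C⟩ := exists_inl_of_mem_triangleAt hw hw' hne
    exact (eq_edgeClique_of_mem_edgeCliques hD C.2 hwC hw'C hne).1

lemma isTriangleSystem_triangleAt (hD : IsEmpty (diamondGraph ↪g H))
    (hK : IsEmpty (completeBipartiteGraph (Fin 1) (Fin 4) ↪g H)) :
    IsTriangleSystem (triangleAt H) where
  card_eq := card_triangleAt hD hK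
  exists_mem := by
    rintro (C | ⟨w, i⟩)
    · obtain ⟨w, x, hwx, hC⟩ := mem_edgeCliques.1 C.2
      exact ⟨w, inl_mem_triangleAt.2 (hC ▸ left_mem_edgeClique hwx)⟩
    · exact ⟨w, inr_mem_triangleAt.2 rfl⟩
  eq_of_mem_of_mem w w' a b hab haw hbw haw' hbw' := by
    by_contra hne
    obtain ⟨C, rfl, hwC, hw'C⟩ := exists_inl_of_mem_triangleAt haw haw' hne
    obtain ⟨D, rfl, hwD, hw'D⟩ := exists_inl_of_mem_triangleAt hbw hbw' hne
    refine hab (congrArg Sum.inl (Subtype.ext ?_))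
    rw [(eq_edgeClique_of_mem_edgeCliques hD C.2 hwC hw'C hne).2,
      (eq_edgeClique_of_mem_edgeCliques hD D.2 hwD hw'D hne).2]
  exists_mem_of_not_disjoint w₁ w₂ w₃ h₁₂ h₁₃ h₂₃ hC₁₂ hC₁₃ hC₂₃ := by
    obtain ⟨v, h₁, h₂⟩ := not_disjoint_iff.1 hC₁₂
    obtain ⟨C, rfl, hw₁C, hw₂C⟩ := exists_inl_of_mem_triangleAt h₁ h₂ h₁₂
    have hw₃C : w₃ ∈ C.1 := by
      rw [(eq_edgeClique_of_mem_edgeCliques hD C.2 hw₁C hw₂C h₁₂).2, mem_edgeClique]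
      exact ⟨Or.inr ((adj_iff_not_disjoint_triangleAt hD _ _).2 ⟨h₁₃, hC₁₃⟩),
        Or.inr ((adj_iff_not_disjoint_triangleAt hD _ _).2 ⟨h₂₃, hC₂₃⟩)⟩
    exact ⟨_, h₁, h₂, inl_mem_triangleAt.2 hw₃C⟩

end Construction

/-- Every finite graph with no induced diamond `K₄ - e` and no induced `K_{1,4}` is the
triangle graph of some finite locally linear graph. -/
theorem exists_locallyLinear_triangleGraph {W : Type*} [Fintype W] (H : SimpleGraph W)
    (hDiamond : IsEmpty (diamondGraph ↪g H))
    (hStar : IsEmpty (completeBipartiteGraph (Fin 1) (Fin 4) ↪g H)) :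
    ∃ (n : ℕ) (G : SimpleGraph (Fin n)),
      IsLocallyLinear G ∧ Nonempty (TriangleGraph G ≃g H) := by
  classical
  exact (isTriangleSystem_triangleAt hDiamond hStar).exists_locallyLinear_triangleGraph_iso H
    (adj_iff_not_disjoint_triangleAt hDiamond)
end

section
/- Let G be a finite simple locally linear graph. The map sending each induced 4-cycle (x₁, x₂, x₃, x₄) of the triangle graph G* to the 4-cycle of G whose vertices are the shared vertices x₁∩x₂, x₂∩x₃, x₃∩x₄, x₄∩x₁ of consecutive triangles is a bijection from the set of induced 4-cycles of G* onto the set of induced 4-cycles of G. -/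
/-!
Write the triangles of an induced 4-cycle of `G*` as `t 0, t 1, t 2, t 3` in cyclic order and
let `x i` be the vertex shared by `t i` and `t (i + 1)`. Non-consecutive triangles are disjoint,
and local linearity (two triangles share at most one vertex; a vertex adjacent to two vertices of
a triangle lies in it) forces the `x i` to form an induced 4-cycle of `G`. Conversely, the
triangles on the four edges of an induced 4-cycle of `G` meet exactly when consecutive. In this
common configuration the shared vertices of the `t i` are the `x i`, and the triangles containing
two of the `x i` are the `t i`, which gives the inverse map.
-/

open SimpleGraph Polynomial Matrix

variable {V : Type*}

theorem cycleGraph_adj_iff {n : ℕ} {i j : Fin (n + 2)} :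
    (cycleGraph (n + 2)).Adj i j ↔ j = i + 1 ∨ i = j + 1 := by
  rw [cycleGraph_adj, sub_eq_iff_eq_add', sub_eq_iff_eq_add', or_comm]

theorem cycleGraph_adj_add_one {n : ℕ} (i : Fin (n + 2)) : (cycleGraph (n + 2)).Adj i (i + 1) :=
  cycleGraph_adj_iff.2 (Or.inl rfl)

theorem mem_inducedCycleSets_iff {W : Type*} {H : SimpleGraph W} {n : ℕ} {s : Set W} :
    s ∈ inducedCycleSets H n ↔ ∃ f : cycleGraph n ↪g H, Set.range f = s := by
  constructor
  · rintro ⟨-, ⟨e⟩⟩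
    exact ⟨(Embedding.induce s).comp e.symm.toEmbedding,
      (e.symm.surjective.range_comp _).trans Subtype.range_coe⟩
  · rintro ⟨f, rfl⟩
    refine ⟨?_, ⟨f.isoInduceRange.symm⟩⟩
    rw [Set.ncard_range_of_injective f.injective, Nat.card_eq_fintype_card, Fintype.card_fin]

abbrev Triangle (G : SimpleGraph V) : Type _ := {t : Finset V // G.IsNClique 3 t}

variable {G : SimpleGraph V}

theorem Triangle.adj (t : Triangle G) {u v : V} (hu : u ∈ t.1) (hv : v ∈ t.1) (huv : u ≠ v) :
    G.Adj u v :=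
  t.2.1 hu hv huv

namespace IsLocallyLinear

theorem exists_triangle (hG : IsLocallyLinear G) {u v : V} (h : G.Adj u v) :
    ∃ t : Triangle G, u ∈ t.1 ∧ v ∈ t.1 :=
  let ⟨t, ⟨ht, hu, hv⟩, _⟩ := hG.2 h
  ⟨⟨t, ht⟩, hu, hv⟩

theorem triangle_eq (hG : IsLocallyLinear G) {t t' : Triangle G} {u v : V} (huv : u ≠ v)
    (hu : u ∈ t.1) (hv : v ∈ t.1) (hu' : u ∈ t'.1) (hv' : v ∈ t'.1) : t = t' :=
  Subtype.ext <| (hG.2 (t.adj hu hv huv)).unique ⟨t.2, hu, hv⟩ ⟨t'.2, hu', hv'⟩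

theorem eq_of_mem_of_mem_s16 (hG : IsLocallyLinear G) {t t' : Triangle G} (h : t ≠ t') {u v : V}
    (hu : u ∈ t.1) (hu' : u ∈ t'.1) (hv : v ∈ t.1) (hv' : v ∈ t'.1) : u = v :=
  not_not.1 fun huv => h (hG.triangle_eq huv hu hv hu' hv')

theorem mem_of_adj_of_adj_s16 (hG : IsLocallyLinear G) {t : Triangle G} {u v w : V}
    (hu : u ∈ t.1) (hv : v ∈ t.1) (huv : u ≠ v) (huw : G.Adj u w) (hvw : G.Adj v w) :
    w ∈ t.1 := by
  classical
  have ht : t.1 = {u, v, w} := (hG.2 (t.adj hu hv huv)).unique ⟨t.2, hu, hv⟩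
    ⟨is3Clique_triple_iff.2 ⟨t.adj hu hv huv, huw, hvw⟩, by simp, by simp⟩
  simp [ht]

theorem disjoint_of_induced_path (hG : IsLocallyLinear G) {t t' : Triangle G} {a b c d : V}
    (ha : a ∈ t.1) (hb : b ∈ t.1) (hc : c ∈ t'.1) (hd : d ∈ t'.1) (hbc : G.Adj b c)
    (hac : a ≠ c) (hbd : b ≠ d) (nac : ¬G.Adj a c) (nbd : ¬G.Adj b d) :
    Disjoint t.1 t'.1 := by
  refine Finset.disjoint_left.2 fun v hv hv' => ?_
  by_cases hvb : v = b
  · subst hvb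
    exact nbd (t'.adj hv' hd hbd)
  by_cases hvc : v = c
  · subst hvc
    exact nac (t.adj ha hv hac)
  exact nac (t.adj ha (hG.mem_of_adj_of_adj_s16 hb hv (Ne.symm hvb) hbc (t'.adj hv' hc hvc)) hac)

end IsLocallyLinear

theorem cycleGraph_four_eq_or_adj_iff {i j : Fin 4} :
    i = j ∨ (cycleGraph 4).Adj i j ↔ j ≠ i + 2 := by
  revert i j; decide

-- In an `IsTriangleSquare t x`, a vertex on `t i`, `t (i + 1)`, `t j` and `t (j + 1)`
-- forces `i = j`.
theorem cycleGraph_four_eq_of_eq_or_adj {i j : Fin 4} (h : i = j ∨ (cycleGraph 4).Adj i j)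
    (h₁ : i + 1 = j ∨ (cycleGraph 4).Adj (i + 1) j)
    (h₂ : i = j + 1 ∨ (cycleGraph 4).Adj i (j + 1)) : i = j := by
  revert i j; decide

structure IsTriangleSquare (t : Fin 4 → Triangle G) (x : Fin 4 → V) : Prop where
  mem_left : ∀ i, x i ∈ (t i).1
  mem_right : ∀ i, x i ∈ (t (i + 1)).1
  eq_or_adj_of_mem :
    ∀ ⦃v i j⦄, v ∈ (t i).1 → v ∈ (t j).1 → i = j ∨ (cycleGraph 4).Adj i j

def sharedVertices (s : Set (Triangle G)) : Set V :=
  {v | ∃ t₁ ∈ s, ∃ t₂ ∈ s, t₁ ≠ t₂ ∧ v ∈ t₁.1 ∧ v ∈ t₂.1}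

variable (G) in
def spannedTriangles (S : Set V) : Set (Triangle G) :=
  {t | ∃ u ∈ S, ∃ v ∈ S, u ≠ v ∧ u ∈ t.1 ∧ v ∈ t.1}

namespace IsTriangleSquare

variable {t : Fin 4 → Triangle G} {x : Fin 4 → V}

theorem injective_vertices (h : IsTriangleSquare t x) : Function.Injective x := fun i j hij =>
  cycleGraph_four_eq_of_eq_or_adj (h.eq_or_adj_of_mem (h.mem_left i) (hij ▸ h.mem_left j))
    (h.eq_or_adj_of_mem (h.mem_right i) (hij ▸ h.mem_left j))
    (h.eq_or_adj_of_mem (h.mem_left i) (hij ▸ h.mem_right j))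

theorem injective_triangles (h : IsTriangleSquare t x) : Function.Injective t := fun i j hij =>
  cycleGraph_four_eq_of_eq_or_adj (h.eq_or_adj_of_mem (h.mem_left i) (hij ▸ h.mem_left i))
    (h.eq_or_adj_of_mem (h.mem_right i) (hij ▸ h.mem_left i))
    (h.eq_or_adj_of_mem (hij ▸ h.mem_left j) (h.mem_right j))

theorem triangleGraph_adj_iff (h : IsTriangleSquare t x) {i j : Fin 4} :
    (TriangleGraph G).Adj (t i) (t j) ↔ (cycleGraph 4).Adj i j := by
  refine ⟨fun ⟨hne, _, hi, hj⟩ =>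
    (h.eq_or_adj_of_mem hi hj).resolve_left (hne <| congrArg t ·),
    fun hij => ⟨h.injective_triangles.ne hij.ne, ?_⟩⟩
  rcases cycleGraph_adj_iff.1 hij with rfl | rfl
  exacts [⟨x i, h.mem_left i, h.mem_right i⟩, ⟨x j, h.mem_right j, h.mem_left j⟩]

theorem adj_of_cycleGraph_adj (h : IsTriangleSquare t x) {i j : Fin 4}
    (hij : (cycleGraph 4).Adj i j) : G.Adj (x i) (x j) := by
  have hne := h.injective_vertices.ne hij.ne
  rcases cycleGraph_adj_iff.1 hij with rfl | rfl
  exacts [(t (i + 1)).adj (h.mem_right i) (h.mem_left _) hne,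
    (t (j + 1)).adj (h.mem_left _) (h.mem_right j) hne]

theorem adj_iff (hG : IsLocallyLinear G) (h : IsTriangleSquare t x) {i j : Fin 4} :
    G.Adj (x i) (x j) ↔ (cycleGraph 4).Adj i j := by
  refine ⟨fun hadj => by_contra fun hij => ?_, h.adj_of_cycleGraph_adj⟩
  have hne : i ≠ j := h.injective_vertices.ne_iff.1 hadj.ne
  obtain rfl : j = i + 2 :=
    not_ne_iff.1 fun hj => (cycleGraph_four_eq_or_adj_iff.2 hj).elim hne hij
  -- `x i`, `x (i + 1)`, `x (i + 2)` would form a triangle, which can only be `t (i + 1)`.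
  have hmem : x (i + 2) ∈ (t (i + 1)).1 :=
    hG.mem_of_adj_of_adj_s16 (h.mem_right i) (h.mem_left _)
      (h.injective_vertices.ne (cycleGraph_adj_add_one i).ne) hadj
      (h.adj_of_cycleGraph_adj (cycleGraph_adj_iff.2 (Or.inl (add_assoc i 1 1).symm)))
  exact cycleGraph_four_eq_or_adj_iff.1 (h.eq_or_adj_of_mem hmem (h.mem_right (i + 2)))
    (add_right_comm _ _ _)

theorem range_triangles_mem (h : IsTriangleSquare t x) :
    Set.range t ∈ inducedCycleSets (TriangleGraph G) 4 :=
  mem_inducedCycleSets_iff.2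
    ⟨⟨⟨t, h.injective_triangles⟩, h.triangleGraph_adj_iff⟩, rfl⟩

theorem range_vertices_mem (hG : IsLocallyLinear G) (h : IsTriangleSquare t x) :
    Set.range x ∈ inducedCycleSets G 4 :=
  mem_inducedCycleSets_iff.2 ⟨⟨⟨x, h.injective_vertices⟩, h.adj_iff hG⟩, rfl⟩

theorem sharedVertices_range (hG : IsLocallyLinear G) (h : IsTriangleSquare t x) :
    sharedVertices (Set.range t) = Set.range x := by
  ext v
  constructor
  · rintro ⟨_, ⟨i, rfl⟩, _, ⟨j, rfl⟩, hne, hi, hj⟩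
    rcases cycleGraph_adj_iff.1 (h.triangleGraph_adj_iff.1 ⟨hne, v, hi, hj⟩) with rfl | rfl
    exacts [⟨i, hG.eq_of_mem_of_mem_s16 hne (h.mem_left i) (h.mem_right i) hi hj⟩,
      ⟨j, hG.eq_of_mem_of_mem_s16 hne (h.mem_right j) (h.mem_left j) hi hj⟩]
  · rintro ⟨i, rfl⟩
    exact ⟨t i, ⟨i, rfl⟩, t (i + 1), ⟨i + 1, rfl⟩,
      (h.triangleGraph_adj_iff.2 (cycleGraph_adj_add_one i)).1, h.mem_left i, h.mem_right i⟩

theorem spannedTriangles_range (hG : IsLocallyLinear G) (h : IsTriangleSquare t x) :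
    spannedTriangles G (Set.range x) = Set.range t := by
  ext s
  constructor
  · rintro ⟨_, ⟨i, rfl⟩, _, ⟨j, rfl⟩, hne, hi, hj⟩
    rcases cycleGraph_adj_iff.1 ((h.adj_iff hG).1 (s.adj hi hj hne)) with rfl | rfl
    exacts [⟨i + 1, hG.triangle_eq hne (h.mem_right i) (h.mem_left _) hi hj⟩,
      ⟨j + 1, hG.triangle_eq hne (h.mem_left _) (h.mem_right j) hi hj⟩]
  · rintro ⟨i, rfl⟩
    obtain ⟨j, rfl⟩ : ∃ j, i = j + 1 := ⟨i - 1, (sub_add_cancel i 1).symm⟩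
    exact ⟨x j, ⟨j, rfl⟩, x (j + 1), ⟨j + 1, rfl⟩,
      h.injective_vertices.ne (cycleGraph_adj_add_one j).ne, h.mem_right j, h.mem_left _⟩

end IsTriangleSquare

theorem exists_isTriangleSquare_of_mem_triangleGraph {s : Set (Triangle G)}
    (hs : s ∈ inducedCycleSets (TriangleGraph G) 4) :
    ∃ t x, IsTriangleSquare t x ∧ Set.range t = s := by
  obtain ⟨φ, rfl⟩ := mem_inducedCycleSets_iff.1 hs
  choose x hx using fun i => (φ.map_adj_iff.2 (cycleGraph_adj_add_one i)).2
  refine ⟨φ, x, ⟨fun i => (hx i).1, fun i => (hx i).2, fun v i j hi hj => ?_⟩, rfl⟩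
  by_cases hij : i = j
  · exact Or.inl hij
  · exact Or.inr (φ.map_adj_iff.1 ⟨φ.injective.ne hij, v, hi, hj⟩)

theorem exists_isTriangleSquare_of_mem (hG : IsLocallyLinear G) {S : Set V}
    (hS : S ∈ inducedCycleSets G 4) :
    ∃ (t : Fin 4 → Triangle G) (x : Fin 4 → V), IsTriangleSquare t x ∧ Set.range x = S := by
  obtain ⟨y, rfl⟩ := mem_inducedCycleSets_iff.1 hS
  choose t ht using fun i => hG.exists_triangle (y.map_adj_iff.2 (cycleGraph_adj_add_one i))
  refine ⟨t, fun i => y (i + 1), ⟨fun i => (ht i).2, fun i => (ht (i + 1)).1,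
    fun v i j hi hj => ?_⟩, (Equiv.addRight 1).surjective.range_comp y⟩
  by_contra hij
  obtain rfl : j = i + 2 := not_ne_iff.1 (cycleGraph_four_eq_or_adj_iff.not.1 hij)
  -- `y i, y (i + 1), y (i + 2), y (i + 3)` is an induced path joining `t i` to `t (i + 2)`.
  have hac := not_or.1 hij
  have hbd :=
    not_or.1 (cycleGraph_four_eq_or_adj_iff.not.2 (not_not.2 (add_right_comm i 2 1)))
  have hbc : (cycleGraph 4).Adj (i + 1) (i + 2) :=
    cycleGraph_adj_iff.2 (Or.inl (add_assoc i 1 1).symm)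
  exact Finset.disjoint_left.1 (hG.disjoint_of_induced_path (ht i).1 (ht i).2 (ht (i + 2)).1
    (ht (i + 2)).2 (y.map_adj_iff.2 hbc) (y.injective.ne hac.1) (y.injective.ne hbd.1)
    (y.map_adj_iff.not.2 hac.2) (y.map_adj_iff.not.2 hbd.2)) hi hj

theorem quadrilateral_bijOn_general (G : SimpleGraph V) (hG : IsLocallyLinear G) :
    Set.BijOn
      (fun s : Set {t : Finset V // G.IsNClique 3 t} =>
        {v : V | ∃ t₁ ∈ s, ∃ t₂ ∈ s, t₁ ≠ t₂ ∧ v ∈ t₁.1 ∧ v ∈ t₂.1})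
      (inducedCycleSets (TriangleGraph G) 4) (inducedCycleSets G 4) := by
  change Set.BijOn sharedVertices _ _
  refine Set.InvOn.bijOn (f' := spannedTriangles G) ⟨fun s hs => ?_, fun S hS => ?_⟩
    (fun s hs => ?_) (fun S hS => ?_)
  · obtain ⟨t, x, h, rfl⟩ := exists_isTriangleSquare_of_mem_triangleGraph hs
    rw [h.sharedVertices_range hG, h.spannedTriangles_range hG]
  · obtain ⟨t, x, h, rfl⟩ := exists_isTriangleSquare_of_mem hG hS
    rw [h.spannedTriangles_range hG, h.sharedVertices_range hG]
  · obtain ⟨t, x, h, rfl⟩ := exists_isTriangleSquare_of_mem_triangleGraph hs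
    rw [h.sharedVertices_range hG]
    exact h.range_vertices_mem hG
  · obtain ⟨t, x, h, rfl⟩ := exists_isTriangleSquare_of_mem hG hS
    rw [h.spannedTriangles_range hG]
    exact h.range_triangles_mem

/-- The map sending an induced 4-cycle of the triangle graph `G*` to the 4-cycle of `G`
formed by the vertices shared by (consecutive) pairs of its triangles is a bijection
from the induced 4-cycles of `G*` onto the induced 4-cycles of `G`. -/
theorem quadrilateral_bijOn [Fintype V] (G : SimpleGraph V) (hG : IsLocallyLinear G) :
    Set.BijOn
      (fun s : Set {t : Finset V // G.IsNClique 3 t} =>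
        {v : V | ∃ t₁ ∈ s, ∃ t₂ ∈ s, t₁ ≠ t₂ ∧ v ∈ t₁.1 ∧ v ∈ t₂.1})
      (inducedCycleSets (TriangleGraph G) 4) (inducedCycleSets G 4) :=
  quadrilateral_bijOn_general G hG
end
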